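/- arXiv:1010.3399 — 3 statements merged into one kernel-verified Lean document; each statement's English description precedes it below -/
import Mathlib

section
/- Let A and B be finite-dimensional, commutative, associative, unital ℝ-algebras, each a local ring with maximal ideals m_A and m_B respectively, both of codimension 1 over ℝ. Then the tensor product A ⊗_ℝ B is again a finite-dimensional local ℝ-algebra whose maximal ideal is m_{A⊗B} = m_A ⊗ B + A ⊗ m_B (i.e., the ideal of A ⊗_ℝ B generated by the images of m_A under a ↦ a ⊗ 1 and of m_B under b ↦ 1 ⊗ b), and this maximal ideal has codimension 1 over ℝ. -/
/-!
The residue maps `A → A ⧸ m_A ≅ ℝ` and `B → B ⧸ m_B ≅ ℝ` are ℝ-algebra homomorphisms, and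
their tensor product `A ⊗ B → ℝ ⊗ ℝ ≅ ℝ` is a surjection whose kernel, by right exactness of
`⊗`, is `m_A ⊗ B + A ⊗ m_B`; so this ideal is maximal with quotient `ℝ`. In a
finite-dimensional local algebra the maximal ideal is the nilradical, so `m_A ⊗ B + A ⊗ m_B`
is generated by nilpotents, and a maximal ideal consisting of nilpotents is the unique one.
-/

open scoped TensorProduct
open IsLocalRing

theorem AlgHom.surjective_onto_base {R A : Type*} [CommSemiring R] [Semiring A] [Algebra R A]
    (f : A →ₐ[R] R) : Function.Surjective f :=
  fun r => ⟨algebraMap R A r, f.commutes r⟩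

theorem Ideal.exists_algHom_ker_eq_of_finrank_quotient_eq_one {K A : Type*} [Field K]
    [CommRing A] [Algebra K A] {I : Ideal A} (hI : Module.finrank K (A ⧸ I) = 1) :
    ∃ χ : A →ₐ[K] K, RingHom.ker χ = I := by
  let e : K ≃ₐ[K] A ⧸ I := AlgEquiv.ofBijective (Algebra.ofId K _)
    (Algebra.finrank_eq_one_iff_bijective_algebraMap.mp hI)
  refine ⟨e.symm.toAlgHom.comp (Ideal.Quotient.mkₐ K I), ?_⟩
  ext a
  simp [Ideal.Quotient.eq_zero_iff_mem]

theorem Algebra.TensorProduct.ker_lid_comp_map {R A B : Type*} [CommRing R] [Ring A] [Ring B]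
    [Algebra R A] [Algebra R B] (f : A →ₐ[R] R) (g : B →ₐ[R] R) :
    RingHom.ker ((Algebra.TensorProduct.lid R R).toAlgHom.comp (map f g)) =
      (RingHom.ker f).map (includeLeft : A →ₐ[R] A ⊗[R] B) ⊔
        (RingHom.ker g).map (includeRight : B →ₐ[R] A ⊗[R] B) := by
  rw [← Algebra.TensorProduct.map_ker (f := f) (g := g) f.surjective_onto_base
    g.surjective_onto_base]
  ext x
  simp

theorem Ideal.map_nilradical_le {R S : Type*} [CommSemiring R] [CommSemiring S] (f : R →+* S) :
    (nilradical R).map f ≤ nilradical S :=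
  Ideal.map_le_iff_le_comap.mpr fun _ hx => mem_nilradical.mpr ((mem_nilradical.mp hx).map f)

theorem IsLocalRing.of_isMaximal_of_le_nilradical {R : Type*} [CommRing R] {m : Ideal R}
    (hm : m.IsMaximal) (hle : m ≤ nilradical R) : IsLocalRing R := by
  have : (nilradical R).IsMaximal := le_antisymm (nilradical_le_prime m) hle ▸ hm
  exact IsLocalRing.of_isMaximal_nilradical R

theorem IsLocalRing.maximalIdeal_eq_nilradical_of_finiteDimensional (K A : Type*) [Field K]
    [CommRing A] [Algebra K A] [FiniteDimensional K A] [IsLocalRing A] :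
    maximalIdeal A = nilradical A := by
  have := IsArtinianRing.of_finite K A
  exact (Ring.KrullDimLE.nilradical_eq_maximalIdeal A).symm

open TensorProduct in
/-- The tensor product of two Weil algebras is a Weil algebra, with maximal
ideal `m_A ⊗ B + A ⊗ m_B` of codimension 1 over ℝ. -/
theorem weil_algebra_tensorProduct
    (A B : Type*) [CommRing A] [Algebra ℝ A] [FiniteDimensional ℝ A]
    [CommRing B] [Algebra ℝ B] [FiniteDimensional ℝ B]
    [IsLocalRing A] [IsLocalRing B]
    (hA : Module.finrank ℝ (A ⧸ IsLocalRing.maximalIdeal A) = 1)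
    (hB : Module.finrank ℝ (B ⧸ IsLocalRing.maximalIdeal B) = 1)
    (m : Ideal (A ⊗[ℝ] B))
    (hm : m = (IsLocalRing.maximalIdeal A).map
          (Algebra.TensorProduct.includeLeft : A →ₐ[ℝ] A ⊗[ℝ] B) ⊔
        (IsLocalRing.maximalIdeal B).map
          (Algebra.TensorProduct.includeRight : B →ₐ[ℝ] A ⊗[ℝ] B)) :
    FiniteDimensional ℝ (A ⊗[ℝ] B) ∧
      IsLocalRing (A ⊗[ℝ] B) ∧
      m.IsMaximal ∧
      Module.finrank ℝ ((A ⊗[ℝ] B) ⧸ m) = 1 := by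
  obtain ⟨χ, hχ⟩ := Ideal.exists_algHom_ker_eq_of_finrank_quotient_eq_one hA
  obtain ⟨ψ, hψ⟩ := Ideal.exists_algHom_ker_eq_of_finrank_quotient_eq_one hB
  let ε := (Algebra.TensorProduct.lid ℝ ℝ).toAlgHom.comp (Algebra.TensorProduct.map χ ψ)
  have hker : RingHom.ker ε = m := by
    rw [Algebra.TensorProduct.ker_lid_comp_map, hχ, hψ, hm]
  have hmax : m.IsMaximal := hker ▸ RingHom.ker_isMaximal_of_surjective ε ε.surjective_onto_base
  have hnil : m ≤ nilradical (A ⊗[ℝ] B) := by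
    rw [hm, maximalIdeal_eq_nilradical_of_finiteDimensional ℝ A,
      maximalIdeal_eq_nilradical_of_finiteDimensional ℝ B]
    exact sup_le (Ideal.map_nilradical_le _) (Ideal.map_nilradical_le _)
  refine ⟨inferInstance, .of_isMaximal_of_le_nilradical hmax hnil, hmax, ?_⟩
  rw [← hker, LinearEquiv.finrank_eq
    (Ideal.quotientKerAlgEquivOfSurjective ε.surjective_onto_base).toLinearEquiv,
    Module.finrank_self]
end

section
/- Let A and B be finite-dimensional, commutative, associative, unital local ℝ-algebras with maximal ideals m_A and m_B of codimension 1 over ℝ, of heights h and l respectively (i.e., m_A^h ≠ (0), m_A^{h+1} = (0), m_B^l ≠ (0), m_B^{l+1} = (0)). Then the maximal ideal m_{A⊗B} = m_A ⊗ B + A ⊗ m_B of the local algebra A ⊗_ℝ B satisfies m_{A⊗B}^{h+l} ≠ (0) and m_{A⊗B}^{h+l+1} = (0); that is, A ⊗_ℝ B has height h + l. -/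
/-!
A nonzero `a ∈ m_A ^ h` and a nonzero `b ∈ m_B ^ l` give the element `a ⊗ b ∈ m ^ (h + l)`, which
is nonzero because a pure tensor of nonzero vectors over a field is nonzero. Conversely, in the
binomial expansion of `(I + J) ^ (h + l + 1)`, with `I`, `J` the extensions of `m_A`, `m_B`, every
term lies in `I ^ (h + 1) = 0` or in `J ^ (l + 1) = 0`.
-/

open TensorProduct

theorem TensorProduct.tmul_ne_zero {R M N : Type*} [CommRing R] [NoZeroDivisors R]
    [AddCommGroup M] [Module R M] [Module.Projective R M]
    [AddCommGroup N] [Module R N] [Module.Projective R N]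
    {m : M} {n : N} (hm : m ≠ 0) (hn : n ≠ 0) : m ⊗ₜ[R] n ≠ 0 := by
  obtain ⟨φ, hφ⟩ := Module.Projective.exists_dual_ne_zero R hm
  obtain ⟨ψ, hψ⟩ := Module.Projective.exists_dual_ne_zero R hn
  intro hmn
  have hφψ : φ m * ψ n = 0 := by
    simpa using congrArg ((TensorProduct.lid R R).toLinearMap ∘ₗ TensorProduct.map φ ψ) hmn
  exact mul_ne_zero hφ hψ hφψ

theorem Ideal.sup_pow_add_add_one_le {R : Type*} [CommSemiring R] (I J : Ideal R) (n k : ℕ) :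
    (I ⊔ J) ^ (n + k + 1) ≤ I ^ (n + 1) ⊔ J ^ (k + 1) := by
  rw [← Ideal.add_eq_sup, ← Ideal.add_eq_sup, add_pow, Ideal.sum_eq_sup]
  refine Finset.sup_le fun i _ => ?_
  by_cases hi : n + 1 ≤ i
  · exact Ideal.mul_le_left.trans (Ideal.mul_le_left.trans
      ((Ideal.pow_le_pow_right hi).trans le_sup_left))
  · exact Ideal.mul_le_left.trans (Ideal.mul_le_right.trans
      ((Ideal.pow_le_pow_right (by omega)).trans le_sup_right))

theorem Algebra.TensorProduct.tmul_mem_pow_map_sup_map {R A B : Type*} [CommSemiring R]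
    [CommSemiring A] [Algebra R A] [CommSemiring B] [Algebra R B]
    {I : Ideal A} {J : Ideal B} {n k : ℕ} {a : A} {b : B} (ha : a ∈ I ^ n) (hb : b ∈ J ^ k) :
    a ⊗ₜ[R] b ∈
      (I.map (includeLeft (S := R) : A →ₐ[R] A ⊗[R] B) ⊔ J.map includeRight) ^ (n + k) := by
  have hab : a ⊗ₜ[R] b = includeLeft (S := R) a * includeRight b := by simp
  rw [hab, pow_add]
  refine Ideal.mul_mem_mul (Ideal.pow_right_mono le_sup_left n ?_)
    (Ideal.pow_right_mono le_sup_right k ?_)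
  · rw [← Ideal.map_pow]
    exact Ideal.mem_map_of_mem _ ha
  · rw [← Ideal.map_pow]
    exact Ideal.mem_map_of_mem _ hb

open TensorProduct in
theorem weil_algebra_tensorProduct_height_general
    (A B : Type*) [CommRing A] [Algebra ℝ A]
    [CommRing B] [Algebra ℝ B]
    [IsLocalRing A] [IsLocalRing B]
    (h l : ℕ)
    (hAh : IsLocalRing.maximalIdeal A ^ h ≠ ⊥)
    (hAh' : IsLocalRing.maximalIdeal A ^ (h + 1) = ⊥)
    (hBl : IsLocalRing.maximalIdeal B ^ l ≠ ⊥)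
    (hBl' : IsLocalRing.maximalIdeal B ^ (l + 1) = ⊥)
    (m : Ideal (A ⊗[ℝ] B))
    (hm : m = (IsLocalRing.maximalIdeal A).map
          (Algebra.TensorProduct.includeLeft : A →ₐ[ℝ] A ⊗[ℝ] B) ⊔
        (IsLocalRing.maximalIdeal B).map
          (Algebra.TensorProduct.includeRight : B →ₐ[ℝ] A ⊗[ℝ] B)) :
    m ^ (h + l) ≠ ⊥ ∧ m ^ (h + l + 1) = ⊥ := by
  subst hm
  constructor
  · obtain ⟨a, ha, ha0⟩ := (Submodule.ne_bot_iff _).mp hAh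
    obtain ⟨b, hb, hb0⟩ := (Submodule.ne_bot_iff _).mp hBl
    exact (Submodule.ne_bot_iff _).mpr ⟨a ⊗ₜ b,
      Algebra.TensorProduct.tmul_mem_pow_map_sup_map ha hb, TensorProduct.tmul_ne_zero ha0 hb0⟩
  · refine le_bot_iff.mp ((Ideal.sup_pow_add_add_one_le _ _ h l).trans ?_)
    rw [← Ideal.map_pow, ← Ideal.map_pow, hAh', hBl', Ideal.map_bot, Ideal.map_bot, sup_idem]

open TensorProduct in
/-- Heights add under tensor product of Weil algebras: if `A` has height `h`
and `B` has height `l`, then `A ⊗[ℝ] B` has height `h + l`. -/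
theorem weil_algebra_tensorProduct_height
    (A B : Type*) [CommRing A] [Algebra ℝ A] [FiniteDimensional ℝ A]
    [CommRing B] [Algebra ℝ B] [FiniteDimensional ℝ B]
    [IsLocalRing A] [IsLocalRing B]
    (hA : Module.finrank ℝ (A ⧸ IsLocalRing.maximalIdeal A) = 1)
    (hB : Module.finrank ℝ (B ⧸ IsLocalRing.maximalIdeal B) = 1)
    (h l : ℕ)
    (hAh : IsLocalRing.maximalIdeal A ^ h ≠ ⊥)
    (hAh' : IsLocalRing.maximalIdeal A ^ (h + 1) = ⊥)
    (hBl : IsLocalRing.maximalIdeal B ^ l ≠ ⊥)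
    (hBl' : IsLocalRing.maximalIdeal B ^ (l + 1) = ⊥)
    (m : Ideal (A ⊗[ℝ] B))
    (hm : m = (IsLocalRing.maximalIdeal A).map
          (Algebra.TensorProduct.includeLeft : A →ₐ[ℝ] A ⊗[ℝ] B) ⊔
        (IsLocalRing.maximalIdeal B).map
          (Algebra.TensorProduct.includeRight : B →ₐ[ℝ] A ⊗[ℝ] B)) :
    m ^ (h + l) ≠ ⊥ ∧ m ^ (h + l + 1) = ⊥ :=
  weil_algebra_tensorProduct_height_general A B h l hAh hAh' hBl hBl' m hm
end

section
/- Let A be a finite-dimensional, commutative, associative, unital local ℝ-algebra with maximal ideal m of codimension 1 over ℝ. Then the map ξ ↦ ξ(id_ℝ) is a bijection from the set of all near points of kind A on the manifold ℝ — i.e., the set of ℝ-algebra homomorphisms ξ : C^∞(ℝ) → A for which there exists x ∈ ℝ with ξ(f) − f(x)·1_A ∈ m for all f ∈ C^∞(ℝ) — onto A. -/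
/-!
Hadamard's lemma `f = f x + (t - x) * h` with `h` smooth, iterated, writes every smooth `f` as
`P(t) + (t - x)ⁿ g` with `P` a polynomial; conversely a polynomial lying in `(t - x)ⁿ C^∞(ℝ)` is
divisible by `(X - x)ⁿ`, since `t - x` is a non-zero-divisor of `C^∞(ℝ)`. So
`C^∞(ℝ) ⧸ (t - x)ⁿ ≅ ℝ[X] ⧸ (X - x)ⁿ`. For a near point `ξ` at `x`, `ξ id - x` lies in the maximal
ideal of `A`, which is nil, so `ξ` kills some `(t - x)ⁿ` and is determined by `ξ id`. Conversely,
every `a : A` is congruent to a real `x` modulo the maximal ideal (codimension one), `(a - x)ⁿ = 0`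
for some `n`, and `X ↦ a` on `ℝ[X] ⧸ (X - x)ⁿ` yields a homomorphism `ξ` with `ξ id = a`, which
is a near point at `x` by Hadamard's lemma once more.
-/

open Function Polynomial
open scoped ContDiff Manifold

theorem ContDiff.uncurry_deriv_fst {F : ℝ → ℝ → ℝ} {n : ℕ∞}
    (hF : ContDiff ℝ (n + 1) (uncurry F)) :
    ContDiff ℝ n (uncurry fun t s => deriv (F · s) t) := by
  have h : ContDiff ℝ (n + 1) (uncurry fun (p : ℝ × ℝ) (u : ℝ) => F u p.2) :=
    hF.comp (contDiff_snd.prodMk (contDiff_snd.comp contDiff_fst))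
  exact (h.fderiv contDiff_fst le_rfl).clm_apply contDiff_const

theorem hasDerivAt_intervalIntegral_of_contDiff {F : ℝ → ℝ → ℝ}
    (hF : ContDiff ℝ 1 (uncurry F)) (a b t₀ : ℝ) :
    HasDerivAt (fun t => ∫ s in a..b, F t s) (∫ s in a..b, deriv (F · s) t₀) t₀ := by
  have hF' : Continuous (uncurry fun t s => deriv (F · s) t) :=
    (ContDiff.uncurry_deriv_fst (n := 0) hF).continuous
  obtain ⟨C, hC⟩ := ((isCompact_closedBall t₀ 1).prod (isCompact_uIcc (a := a) (b := b)))
    |>.exists_bound_of_continuousOn hF'.continuousOn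
  refine (intervalIntegral.hasDerivAt_integral_of_dominated_loc_of_deriv_le
    (μ := MeasureTheory.volume) (F' := fun t s => deriv (F · s) t) (bound := fun _ => C)
    (Metric.ball_mem_nhds t₀ one_pos) ?_ ?_ ?_ ?_ intervalIntegrable_const ?_).2
  · exact .of_forall fun t => (hF.continuous.comp (Continuous.prodMk_right t)).aestronglyMeasurable
  · exact (hF.continuous.comp (Continuous.prodMk_right t₀)).intervalIntegrable _ _
  · exact (hF'.comp (Continuous.prodMk_right t₀)).aestronglyMeasurable
  · exact .of_forall fun s hs t ht =>
      hC (t, s) ⟨Metric.ball_subset_closedBall ht, Set.uIoc_subset_uIcc hs⟩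
  · exact .of_forall fun s _ t _ =>
      ((hF.comp (contDiff_id.prodMk contDiff_const)).differentiable one_ne_zero t).hasDerivAt

theorem contDiff_intervalIntegral_of_contDiff {F : ℝ → ℝ → ℝ}
    (hF : ContDiff ℝ ∞ (uncurry F)) (a b : ℝ) : ContDiff ℝ ∞ fun t => ∫ s in a..b, F t s := by
  refine contDiff_infty.2 fun n => ?_
  induction n generalizing F with
  | zero =>
    exact contDiff_zero.2 (continuous_iff_continuousAt.2 fun t =>
      (hasDerivAt_intervalIntegral_of_contDiff (hF.of_le (by simp)) a b t).continuousAt)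
  | succ n ih =>
    have hderiv t := hasDerivAt_intervalIntegral_of_contDiff (hF.of_le (by simp)) a b t
    rw [Nat.cast_succ, contDiff_succ_iff_deriv, funext fun t => (hderiv t).deriv]
    exact ⟨fun t => (hderiv t).differentiableAt, by simp,
      ih (ContDiff.uncurry_deriv_fst (n := ⊤) hF)⟩

theorem ContDiff.exists_eq_add_sub_mul {f : ℝ → ℝ} (hf : ContDiff ℝ ∞ f) (x : ℝ) :
    ∃ h : ℝ → ℝ, ContDiff ℝ ∞ h ∧ ∀ t, f t = f x + (t - x) * h t := by
  have hf' : ContDiff ℝ ∞ (deriv f) := (contDiff_infty_iff_deriv.1 hf).2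
  have hh : ContDiff ℝ ∞ fun t => ∫ s in (0 : ℝ)..1, deriv f ((t - x) * s + x) :=
    contDiff_intervalIntegral_of_contDiff (F := fun t s => deriv f ((t - x) * s + x))
      (hf'.comp (by fun_prop : ContDiff ℝ ∞ fun p : ℝ × ℝ => (p.1 - x) * p.2 + x)) 0 1
  refine ⟨_, hh, fun t => ?_⟩
  rw [intervalIntegral.mul_integral_comp_mul_add, mul_zero, mul_one, zero_add, sub_add_cancel,
    intervalIntegral.integral_deriv_eq_sub
      (fun y _ => (hf.differentiable (by simp)).differentiableAt)
      (hf'.continuous.intervalIntegrable _ _)]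
  ring

theorem IsLocalRing.exists_sub_algebraMap_mem_maximalIdeal {K A : Type*} [Field K] [CommRing A]
    [Algebra K A] [IsLocalRing A] (h : Module.finrank K (A ⧸ maximalIdeal A) = 1) (a : A) :
    ∃ x : K, a - algebraMap K A x ∈ maximalIdeal A := by
  obtain ⟨x, hx⟩ :=
    (Algebra.finrank_eq_one_iff_bijective_algebraMap.1 h).2 (Ideal.Quotient.mk _ a)
  exact ⟨x, Ideal.Quotient.eq.1 hx.symm⟩

theorem IsLocalRing.isNilpotent_of_mem_maximalIdeal {K A : Type*} [Field K] [CommRing A]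
    [Algebra K A] [FiniteDimensional K A] [IsLocalRing A] {a : A} (ha : a ∈ maximalIdeal A) :
    IsNilpotent a :=
  have := IsArtinianRing.of_finite K A
  Ring.KrullDimLE.isNilpotent_iff_mem_maximalIdeal.2 ha

namespace ContMDiffMap

section Apply

variable {𝕜 E H M : Type*} [NontriviallyNormedField 𝕜] [NormedAddCommGroup E] [NormedSpace 𝕜 E]
  [TopologicalSpace H] {I : ModelWithCorners 𝕜 E H} [TopologicalSpace M] [ChartedSpace H M]
  {n : WithTop ℕ∞}

@[simp]
theorem id_apply (x : M) : (ContMDiffMap.id : C^n⟮I, M; I, M⟯) x = x := rfl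

@[simp]
theorem algebraMap_apply {R : Type*} [NormedRing R] [NormedAlgebra 𝕜 R]
    [ContMDiffRing 𝓘(𝕜, R) n R] (c : 𝕜) (x : M) :
    algebraMap 𝕜 C^n⟮I, M; 𝓘(𝕜, R), R⟯ c x = algebraMap 𝕜 R c := rfl

end Apply

local notation "𝓒∞" => C^(⊤ : ℕ∞)⟮𝓘(ℝ, ℝ), ℝ; 𝓘(ℝ, ℝ), ℝ⟯
local notation "𝕏" => (ContMDiffMap.id : 𝓒∞)

theorem exists_eq_algebraMap_add_id_sub_mul (f : 𝓒∞) (x : ℝ) :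
    ∃ h : 𝓒∞, f = algebraMap ℝ 𝓒∞ (f x) + (𝕏 - algebraMap ℝ 𝓒∞ x) * h := by
  obtain ⟨h, hh, hfh⟩ := f.contMDiff.contDiff.exists_eq_add_sub_mul x
  exact ⟨⟨h, hh.contMDiff⟩, ext fun t => hfh t⟩

theorem exists_eq_aeval_id_add_id_sub_pow_mul (f : 𝓒∞) (x : ℝ) (n : ℕ) :
    ∃ (P : ℝ[X]) (g : 𝓒∞), f = aeval 𝕏 P + (𝕏 - algebraMap ℝ 𝓒∞ x) ^ n * g := by
  induction n with
  | zero => exact ⟨0, f, by simp⟩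
  | succ n ih =>
    obtain ⟨P, g, hf⟩ := ih
    obtain ⟨h, hg⟩ := exists_eq_algebraMap_add_id_sub_mul g x
    generalize g x = c at hg
    refine ⟨P + Polynomial.C c * (X - Polynomial.C x) ^ n, h, ?_⟩
    rw [hf, hg]
    simp only [map_add, map_mul, map_pow, map_sub, aeval_X, aeval_C]
    ring

@[simp]
theorem aeval_id_apply (P : ℝ[X]) (t : ℝ) : aeval 𝕏 P t = P.eval t := by
  rw [← coeFnAlgHom_apply, ← aeval_algHom_apply, aeval_fn_apply, coe_aeval_eq_eval]
  rfl

theorem eq_zero_of_id_sub_mul_eq_zero {x : ℝ} {f : 𝓒∞}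
    (hf : (𝕏 - algebraMap ℝ 𝓒∞ x) * f = 0) : f = 0 := by
  have hoff : Set.EqOn f 0 {x}ᶜ := fun t ht =>
    (mul_eq_zero.1 (by simpa using congrArg (· t) hf)).resolve_left (sub_ne_zero.2 ht)
  exact DFunLike.coe_injective <|
    Continuous.ext_on (dense_compl_singleton x) f.contMDiff.continuous continuous_zero hoff

theorem pow_dvd_of_aeval_id_eq_pow_mul {x : ℝ} {n : ℕ} {P : ℝ[X]} {g : 𝓒∞}
    (hP : aeval 𝕏 P = (𝕏 - algebraMap ℝ 𝓒∞ x) ^ n * g) : (X - Polynomial.C x) ^ n ∣ P := by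
  induction n generalizing P with
  | zero => exact one_dvd P
  | succ n ih =>
    have hroot : P.IsRoot x := by simpa using congrArg (· x) hP
    obtain ⟨Q, rfl⟩ := dvd_iff_isRoot.2 hroot
    have hQ : aeval 𝕏 Q = (𝕏 - algebraMap ℝ 𝓒∞ x) ^ n * g := by
      refine sub_eq_zero.1 (eq_zero_of_id_sub_mul_eq_zero (x := x) ?_)
      rw [mul_sub, ← mul_assoc, ← pow_succ', ← hP, map_mul, map_sub, aeval_X, aeval_C, sub_self]
    rw [pow_succ']
    exact mul_dvd_mul_left _ (ih hQ)

variable {A : Type*} [CommRing A] [Algebra ℝ A]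

theorem algHom_ext_of_pow_sub_eq_zero {ξ₁ ξ₂ : 𝓒∞ →ₐ[ℝ] A} (h : ξ₁ 𝕏 = ξ₂ 𝕏) {x : ℝ} {n : ℕ}
    (hn : (ξ₁ 𝕏 - algebraMap ℝ A x) ^ n = 0) : ξ₁ = ξ₂ := by
  ext f
  obtain ⟨P, g, rfl⟩ := exists_eq_aeval_id_add_id_sub_pow_mul f x n
  have hξ (ξ : 𝓒∞ →ₐ[ℝ] A) (hξ : ξ 𝕏 = ξ₁ 𝕏) :
      ξ (aeval 𝕏 P + (𝕏 - algebraMap ℝ 𝓒∞ x) ^ n * g) = aeval (ξ₁ 𝕏) P := by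
    rw [map_add, map_mul, map_pow, map_sub, AlgHom.commutes, hξ, hn, zero_mul, add_zero, ← hξ,
      aeval_algHom_apply]
  rw [hξ ξ₁ rfl, hξ ξ₂ h.symm]

theorem exists_algHom_id_eq {a : A} {x : ℝ} {n : ℕ} (ha : (a - algebraMap ℝ A x) ^ n = 0) :
    ∃ ξ : 𝓒∞ →ₐ[ℝ] A, ξ 𝕏 = a := by
  let I : Ideal 𝓒∞ := Ideal.span {(𝕏 - algebraMap ℝ 𝓒∞ x) ^ n}
  let φ : ℝ[X] →ₐ[ℝ] 𝓒∞ ⧸ I := (Ideal.Quotient.mkₐ ℝ I).comp (aeval 𝕏)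
  have hφ : Function.Surjective φ := by
    intro f
    obtain ⟨f, rfl⟩ := Ideal.Quotient.mk_surjective f
    obtain ⟨P, g, rfl⟩ := exists_eq_aeval_id_add_id_sub_pow_mul f x n
    refine ⟨P, ?_⟩
    simp [φ, I]
  have hker : RingHom.ker φ.toRingHom ≤ RingHom.ker (aeval a).toRingHom := by
    intro P hP
    obtain ⟨g, hg⟩ := Ideal.mem_span_singleton'.1 (Ideal.Quotient.eq_zero_iff_mem.1 hP)
    obtain ⟨Q, rfl⟩ := pow_dvd_of_aeval_id_eq_pow_mul (hg.symm.trans (mul_comm _ _))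
    simp [ha]
  refine ⟨(φ.liftOfSurjective hφ (aeval a) hker).comp (Ideal.Quotient.mkₐ ℝ I), ?_⟩
  have hX : φ X = Ideal.Quotient.mkₐ ℝ I 𝕏 := by simp [φ]
  rw [AlgHom.comp_apply, ← hX, AlgHom.liftOfSurjective_apply, aeval_X]

theorem algHom_sub_algebraMap_mem (ξ : 𝓒∞ →ₐ[ℝ] A) {J : Ideal A} {x : ℝ}
    (hξ : ξ 𝕏 - algebraMap ℝ A x ∈ J) (f : 𝓒∞) : ξ f - algebraMap ℝ A (f x) ∈ J := by
  obtain ⟨h, hf⟩ := exists_eq_algebraMap_add_id_sub_mul f x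
  generalize f x = c at hf ⊢
  subst hf
  rw [map_add, map_mul, map_sub, AlgHom.commutes, AlgHom.commutes, add_sub_cancel_left]
  exact J.mul_mem_right _ hξ

end ContMDiffMap

open Manifold in
/-- For a Weil algebra `A`, evaluation at `id_ℝ` is a bijection from the set of
near points of kind `A` on the manifold `ℝ` onto `A`. -/
theorem nearPoints_of_real_equiv
    (A : Type*) [CommRing A] [Algebra ℝ A] [FiniteDimensional ℝ A]
    [IsLocalRing A]
    (hcodim : Module.finrank ℝ (A ⧸ IsLocalRing.maximalIdeal A) = 1) :
    Function.Bijective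
      (fun ξ : {ξ : C^(⊤ : ℕ∞)⟮𝓘(ℝ, ℝ), ℝ; 𝓘(ℝ, ℝ), ℝ⟯ →ₐ[ℝ] A //
          ∃ x : ℝ, ∀ f : C^(⊤ : ℕ∞)⟮𝓘(ℝ, ℝ), ℝ; 𝓘(ℝ, ℝ), ℝ⟯,
            ξ f - algebraMap ℝ A (f x) ∈ IsLocalRing.maximalIdeal A} =>
        ξ.1 (ContMDiffMap.id : C^(⊤ : ℕ∞)⟮𝓘(ℝ, ℝ), ℝ; 𝓘(ℝ, ℝ), ℝ⟯)) := by
  refine ⟨?_, fun a => ?_⟩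
  · rintro ⟨ξ₁, x, hξ₁⟩ ⟨ξ₂, _⟩ h
    obtain ⟨n, hn⟩ := IsLocalRing.isNilpotent_of_mem_maximalIdeal (K := ℝ) (hξ₁ ContMDiffMap.id)
    exact Subtype.ext (ContMDiffMap.algHom_ext_of_pow_sub_eq_zero h hn)
  · obtain ⟨x, hx⟩ := IsLocalRing.exists_sub_algebraMap_mem_maximalIdeal hcodim a
    obtain ⟨n, hn⟩ := IsLocalRing.isNilpotent_of_mem_maximalIdeal (K := ℝ) hx
    obtain ⟨ξ, rfl⟩ := ContMDiffMap.exists_algHom_id_eq hn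
    exact ⟨⟨ξ, x, ContMDiffMap.algHom_sub_algebraMap_mem ξ hx⟩, rfl⟩
end
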